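/- Fifth-order PMKdV flow is a symmetry of the third-order PMKdV flow: for smooth v, with K₃(v) = v''' + (1/2)(v')³ and K₅(v) = v⁽⁵⁾ + (5/2)(v')²v''' + (5/2)v'(v'')² + (3/8)(v')⁵, the commutator K₃'(v)[K₅(v)] − K₅'(v)[K₃(v)] vanishes identically. -/

import Mathlib

private theorem hda_of_eq {f : ℝ → ℝ} {x a b : ℝ} (h : HasDerivAt f a x) (e : a = b) :
    HasDerivAt f b x := e ▸ h



/-- Fifth-order PMKdV flow is a symmetry of the third-order PMKdV flow:
K₃'(v)[K₅(v)] = K₅'(v)[K₃(v)], with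
K₃(v) = v''' + (1/2)(v')³, K₅(v) = v⁽⁵⁾ + (5/2)(v')²v''' + (5/2)v'(v'')² + (3/8)(v')⁵,
K₃'(v)[G] = G''' + (3/2)(v')²G',
K₅'(v)[G] = G⁽⁵⁾ + (5/2)(v')²G''' + 5v'v'''G' + (5/2)(v'')²G' + 5v'v''G'' + (15/8)(v')⁴G'. -/
theorem stmt_5 (v : ℝ → ℝ) (hv : ContDiff ℝ (⊤ : ℕ∞) v) :
    ∀ x,
      (deriv (deriv (deriv (fun s =>
          deriv (deriv (deriv (deriv (deriv v)))) s
          + (5/2) * (deriv v s)^2 * deriv (deriv (deriv v)) s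
          + (5/2) * deriv v s * (deriv (deriv v) s)^2
          + (3/8) * (deriv v s)^5))) x
       + (3/2) * (deriv v x)^2 *
          deriv (fun s =>
            deriv (deriv (deriv (deriv (deriv v)))) s
            + (5/2) * (deriv v s)^2 * deriv (deriv (deriv v)) s
            + (5/2) * deriv v s * (deriv (deriv v) s)^2
            + (3/8) * (deriv v s)^5) x)
      =
      (deriv (deriv (deriv (deriv (deriv (fun s =>
          deriv (deriv (deriv v)) s + (1/2) * (deriv v s)^3))))) x
       + (5/2) * (deriv v x)^2 *
          deriv (deriv (deriv (fun s =>
            deriv (deriv (deriv v)) s + (1/2) * (deriv v s)^3))) x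
       + 5 * deriv v x * deriv (deriv (deriv v)) x *
          deriv (fun s => deriv (deriv (deriv v)) s + (1/2) * (deriv v s)^3) x
       + (5/2) * (deriv (deriv v) x)^2 *
          deriv (fun s => deriv (deriv (deriv v)) s + (1/2) * (deriv v s)^3) x
       + 5 * deriv v x * deriv (deriv v) x *
          deriv (deriv (fun s => deriv (deriv (deriv v)) s + (1/2) * (deriv v s)^3)) x
       + (15/8) * (deriv v x)^4 *
          deriv (fun s => deriv (deriv (deriv v)) s + (1/2) * (deriv v s)^3) x) := by
  intro x
  have hC : ∀ n : ℕ, Differentiable ℝ (deriv^[n] v) := fun n =>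
    ((hv.of_le (by simp)).iterate_deriv n).differentiable (by simp)
  have hd1 : ∀ x : ℝ, HasDerivAt (deriv^[1] v) (deriv^[2] v x) x := by
    have e : deriv^[2] v = deriv (deriv^[1] v) := Function.iterate_succ_apply' deriv 1 v
    intro x; rw [e]; exact (hC 1 x).hasDerivAt
  have hd2 : ∀ x : ℝ, HasDerivAt (deriv^[2] v) (deriv^[3] v x) x := by
    have e : deriv^[3] v = deriv (deriv^[2] v) := Function.iterate_succ_apply' deriv 2 v
    intro x; rw [e]; exact (hC 2 x).hasDerivAt
  have hd3 : ∀ x : ℝ, HasDerivAt (deriv^[3] v) (deriv^[4] v x) x := by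
    have e : deriv^[4] v = deriv (deriv^[3] v) := Function.iterate_succ_apply' deriv 3 v
    intro x; rw [e]; exact (hC 3 x).hasDerivAt
  have hd4 : ∀ x : ℝ, HasDerivAt (deriv^[4] v) (deriv^[5] v x) x := by
    have e : deriv^[5] v = deriv (deriv^[4] v) := Function.iterate_succ_apply' deriv 4 v
    intro x; rw [e]; exact (hC 4 x).hasDerivAt
  have hd5 : ∀ x : ℝ, HasDerivAt (deriv^[5] v) (deriv^[6] v x) x := by
    have e : deriv^[6] v = deriv (deriv^[5] v) := Function.iterate_succ_apply' deriv 5 v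
    intro x; rw [e]; exact (hC 5 x).hasDerivAt
  have hd6 : ∀ x : ℝ, HasDerivAt (deriv^[6] v) (deriv^[7] v x) x := by
    have e : deriv^[7] v = deriv (deriv^[6] v) := Function.iterate_succ_apply' deriv 6 v
    intro x; rw [e]; exact (hC 6 x).hasDerivAt
  have hd7 : ∀ x : ℝ, HasDerivAt (deriv^[7] v) (deriv^[8] v x) x := by
    have e : deriv^[8] v = deriv (deriv^[7] v) := Function.iterate_succ_apply' deriv 7 v
    intro x; rw [e]; exact (hC 7 x).hasDerivAt
  have hd8 : ∀ x : ℝ, HasDerivAt (deriv^[8] v) (deriv^[9] v x) x := by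
    have e : deriv^[9] v = deriv (deriv^[8] v) := Function.iterate_succ_apply' deriv 8 v
    intro x; rw [e]; exact (hC 8 x).hasDerivAt
  have EK51 : deriv (fun s => deriv^[5] v s + 5/2 * (deriv^[1] v s)^2 * deriv^[3] v s + 5/2 * deriv^[1] v s * (deriv^[2] v s)^2 + 3/8 * (deriv^[1] v s)^5) = (fun y => deriv^[6] v y + 5/2 * (deriv^[1] v y)^2 * deriv^[4] v y + 10 * deriv^[1] v y * deriv^[2] v y * deriv^[3] v y + 5/2 * (deriv^[2] v y)^3 + 15/8 * (deriv^[1] v y)^4 * deriv^[2] v y) :=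
    funext fun x => (hda_of_eq ((((hd5 x).add ((HasDerivAt.const_mul ((5/2 : ℝ)) ((hd1 x).pow 2)).mul (hd3 x))).add ((HasDerivAt.const_mul ((5/2 : ℝ)) (hd1 x)).mul ((hd2 x).pow 2))).add (HasDerivAt.const_mul ((3/8 : ℝ)) ((hd1 x).pow 5))) (by simp only [Pi.pow_apply]; push_cast; ring)).deriv
  have EK52 : deriv (fun s => deriv^[6] v s + 5/2 * (deriv^[1] v s)^2 * deriv^[4] v s + 10 * deriv^[1] v s * deriv^[2] v s * deriv^[3] v s + 5/2 * (deriv^[2] v s)^3 + 15/8 * (deriv^[1] v s)^4 * deriv^[2] v s) = (fun y => deriv^[7] v y + 5/2 * (deriv^[1] v y)^2 * deriv^[5] v y + 15 * deriv^[1] v y * deriv^[2] v y * deriv^[4] v y + 10 * deriv^[1] v y * (deriv^[3] v y)^2 + 35/2 * (deriv^[2] v y)^2 * deriv^[3] v y + 15/8 * (deriv^[1] v y)^4 * deriv^[3] v y + 15/2 * (deriv^[1] v y)^3 * (deriv^[2] v y)^2) :=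
    funext fun x => (hda_of_eq (((((hd6 x).add ((HasDerivAt.const_mul ((5/2 : ℝ)) ((hd1 x).pow 2)).mul (hd4 x))).add (((HasDerivAt.const_mul ((10 : ℝ)) (hd1 x)).mul (hd2 x)).mul (hd3 x))).add (HasDerivAt.const_mul ((5/2 : ℝ)) ((hd2 x).pow 3))).add ((HasDerivAt.const_mul ((15/8 : ℝ)) ((hd1 x).pow 4)).mul (hd2 x))) (by simp only [Pi.pow_apply, Pi.mul_apply]; push_cast; ring)).deriv
  have EK53 : deriv (fun s => deriv^[7] v s + 5/2 * (deriv^[1] v s)^2 * deriv^[5] v s + 15 * deriv^[1] v s * deriv^[2] v s * deriv^[4] v s + 10 * deriv^[1] v s * (deriv^[3] v s)^2 + 35/2 * (deriv^[2] v s)^2 * deriv^[3] v s + 15/8 * (deriv^[1] v s)^4 * deriv^[3] v s + 15/2 * (deriv^[1] v s)^3 * (deriv^[2] v s)^2) = (fun y => deriv^[8] v y + 5/2 * (deriv^[1] v y)^2 * deriv^[6] v y + 20 * deriv^[1] v y * deriv^[2] v y * deriv^[5] v y + 35 * deriv^[1] v y * deriv^[3] v y * deriv^[4] v y + 65/2 *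 (deriv^[2] v y)^2 * deriv^[4] v y + 15/8 * (deriv^[1] v y)^4 * deriv^[4] v y + 45 * deriv^[2] v y * (deriv^[3] v y)^2 + 45/2 * (deriv^[1] v y)^3 * deriv^[2] v y * deriv^[3] v y + 45/2 * (deriv^[1] v y)^2 * (deriv^[2] v y)^3) :=
    funext fun x => (hda_of_eq (((((((hd7 x).add ((HasDerivAt.const_mul ((5/2 : ℝ)) ((hd1 x).pow 2)).mul (hd5 x))).add (((HasDerivAt.const_mul ((15 : ℝ)) (hd1 x)).mul (hd2 x)).mul (hd4 x))).add ((HasDerivAt.const_mul ((10 : ℝ)) (hd1 x)).mul ((hd3 x).pow 2))).add ((HasDerivAt.const_mul ((35/2 : ℝ)) ((hd2 x).pow 2)).mul (hd3 x))).add ((HasDerivAt.const_mul ((15/8 : ℝ)) ((hd1 x).pow 4)).mul (hd3 x))).add ((HasDerivAt.const_mul ((15/2 : ℝ)) ((hd1 x).pow 3)).mul ((hd2 x).pow 2))) (by simp only [Pi.pow_apply, Pi.mul_apply]; push_cast; ring)).deriv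
  have EK31 : deriv (fun s => deriv^[3] v s + 1/2 * (deriv^[1] v s)^3) = (fun y => deriv^[4] v y + 3/2 * (deriv^[1] v y)^2 * deriv^[2] v y) :=
    funext fun x => (hda_of_eq ((hd3 x).add (HasDerivAt.const_mul ((1/2 : ℝ)) ((hd1 x).pow 3))) (by push_cast; ring)).deriv
  have EK32 : deriv (fun s => deriv^[4] v s + 3/2 * (deriv^[1] v s)^2 * deriv^[2] v s) = (fun y => deriv^[5] v y + 3/2 * (deriv^[1] v y)^2 * deriv^[3] v y + 3 * deriv^[1] v y * (deriv^[2] v y)^2) :=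
    funext fun x => (hda_of_eq ((hd4 x).add ((HasDerivAt.const_mul ((3/2 : ℝ)) ((hd1 x).pow 2)).mul (hd2 x))) (by simp only [Pi.pow_apply]; push_cast; ring)).deriv
  have EK33 : deriv (fun s => deriv^[5] v s + 3/2 * (deriv^[1] v s)^2 * deriv^[3] v s + 3 * deriv^[1] v s * (deriv^[2] v s)^2) = (fun y => deriv^[6] v y + 3/2 * (deriv^[1] v y)^2 * deriv^[4] v y + 9 * deriv^[1] v y * deriv^[2] v y * deriv^[3] v y + 3 * (deriv^[2] v y)^3) :=
    funext fun x => (hda_of_eq (((hd5 x).add ((HasDerivAt.const_mul ((3/2 : ℝ)) ((hd1 x).pow 2)).mul (hd3 x))).add ((HasDerivAt.const_mul ((3 : ℝ)) (hd1 x)).mul ((hd2 x).pow 2))) (by simp only [Pi.pow_apply]; push_cast; ring)).deriv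
  have EK34 : deriv (fun s => deriv^[6] v s + 3/2 * (deriv^[1] v s)^2 * deriv^[4] v s + 9 * deriv^[1] v s * deriv^[2] v s * deriv^[3] v s + 3 * (deriv^[2] v s)^3) = (fun y => deriv^[7] v y + 3/2 * (deriv^[1] v y)^2 * deriv^[5] v y + 12 * deriv^[1] v y * deriv^[2] v y * deriv^[4] v y + 9 * deriv^[1] v y * (deriv^[3] v y)^2 + 18 * (deriv^[2] v y)^2 * deriv^[3] v y) :=
    funext fun x => (hda_of_eq ((((hd6 x).add ((HasDerivAt.const_mul ((3/2 : ℝ)) ((hd1 x).pow 2)).mul (hd4 x))).add (((HasDerivAt.const_mul ((9 : ℝ)) (hd1 x)).mul (hd2 x)).mul (hd3 x))).add (HasDerivAt.const_mul ((3 : ℝ)) ((hd2 x).pow 3))) (by simp only [Pi.pow_apply, Pi.mul_apply]; push_cast; ring)).deriv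
  have EK35 : deriv (fun s => deriv^[7] v s + 3/2 * (deriv^[1] v s)^2 * deriv^[5] v s + 12 * deriv^[1] v s * deriv^[2] v s * deriv^[4] v s + 9 * deriv^[1] v s * (deriv^[3] v s)^2 + 18 * (deriv^[2] v s)^2 * deriv^[3] v s) = (fun y => deriv^[8] v y + 3/2 * (deriv^[1] v y)^2 * deriv^[6] v y + 15 * deriv^[1] v y * deriv^[2] v y * deriv^[5] v y + 30 * deriv^[1] v y * deriv^[3] v y * deriv^[4] v y + 30 * (deriv^[2] v y)^2 * deriv^[4] v y + 45 * deriv^[2] v y * (deriv^[3] v y)^2) :=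
    funext fun x => (hda_of_eq (((((hd7 x).add ((HasDerivAt.const_mul ((3/2 : ℝ)) ((hd1 x).pow 2)).mul (hd5 x))).add (((HasDerivAt.const_mul ((12 : ℝ)) (hd1 x)).mul (hd2 x)).mul (hd4 x))).add ((HasDerivAt.const_mul ((9 : ℝ)) (hd1 x)).mul ((hd3 x).pow 2))).add ((HasDerivAt.const_mul ((18 : ℝ)) ((hd2 x).pow 2)).mul (hd3 x))) (by simp only [Pi.pow_apply, Pi.mul_apply]; push_cast; ring)).deriv
  show (deriv (deriv (deriv (fun s => deriv^[5] v s + 5/2 * (deriv^[1] v s)^2 * deriv^[3] v s + 5/2 * deriv^[1] v s * (deriv^[2] v s)^2 + 3/8 * (deriv^[1] v s)^5))) x + 3/2 * (deriv^[1] v x)^2 * deriv (fun s => deriv^[5] v s + 5/2 * (deriv^[1] v s)^2 * deriv^[3] v s + 5/2 * deriv^[1] v s * (deriv^[2] v s)^2 + 3/8 * (deriv^[1] v s)^5) x)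
      = (deriv (deriv (deriv (deriv (deriv (fun s => deriv^[3] v s + 1/2 * (deriv^[1] v s)^3))))) x + 5/2 * (deriv^[1] v x)^2 * deriv (deriv (deriv (fun s => deriv^[3] v s + 1/2 * (deriv^[1] v s)^3))) x
       + 5 * deriv^[1] v x * deriv^[3] v x * deriv (fun s => deriv^[3] v s + 1/2 * (deriv^[1] v s)^3) x
       + 5/2 * (deriv^[2] v x)^2 * deriv (fun s => deriv^[3] v s + 1/2 * (deriv^[1] v s)^3) x
       + 5 * deriv^[1] v x * deriv^[2] v x * deriv (deriv (fun s => deriv^[3] v s + 1/2 * (deriv^[1] v s)^3)) x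
       + 15/8 * (deriv^[1] v x)^4 * deriv (fun s => deriv^[3] v s + 1/2 * (deriv^[1] v s)^3) x)
  simp only [EK51, EK52, EK53, EK31, EK32, EK33, EK34, EK35]
  ring
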